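/- arXiv:1201.1419 — 2 statements merged into one kernel-verified Lean document; each statement's English description precedes it below -/
import Mathlib

section
/- For |z| < min_{P∈Λ\{0}} |P|, the Weierstrass zeta function admits the Laurent/Taylor expansion ζ(z) = 1/z − ∑_{k=1}^∞ s_{k+1} z^{2k+1}, where s_j = ∑'_{P∈Λ} P^{−2j} (and s₁ := 0). More generally its 2n-th derivative satisfies ζ^{(2n)}(z) = (2n)!/z^{2n+1} − ∑_{k=0}^∞ s_{n+k+1} ((2n+2k+1)!/(2k+1)!) z^{2k+1}. -/
/-- The nonzero lattice point `2mω₁ + 2nω₂` indexed by `(m,n) ≠ (0,0)`. -/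
noncomputable def latticePt (ω₁ ω₂ : ℂ) (p : ℤ × ℤ) : ℂ :=
  2*(p.1 : ℂ)*ω₁ + 2*(p.2 : ℂ)*ω₂

/-- The Weierstrass zeta function of the lattice generated by `2ω₁` and `2ω₂`. -/
noncomputable def wzeta (ω₁ ω₂ z : ℂ) : ℂ :=
  1/z + ∑' p : {p : ℤ × ℤ // p ≠ 0},
    (1/(z - latticePt ω₁ ω₂ p.1) + 1/latticePt ω₁ ω₂ p.1 + z/(latticePt ω₁ ω₂ p.1)^2)

/-!
For `‖z‖ < ‖P‖` every summand of `ζ` is a geometric tail,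
`1/(z - P) + 1/P + z/P² = -∑_{j ≥ 2} z^j / P^(j+1)`, and for `‖z‖ < r ≤ ‖P‖` its terms are
bounded by `‖P‖⁻³ ‖z‖² (‖z‖/r)^(j-2)`. Since `∑ ‖P‖⁻³` converges (compare the Eisenstein series
of weight 3), the double series converges absolutely and the two summations may be exchanged:
`ζ(z) = 1/z - g(z)` with `g(z) = ∑_{j ≥ 2} (∑' P^-(j+1)) z^j` a power series converging on the
ball of radius `r`. The symmetry `P ↦ -P` kills the odd lattice sums, so only the odd powers
`z^(2k+1)` survive. Differentiating `g` term by term, and `1/z` explicitly, gives the `2n`-th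
derivative.
-/

open Filter Topology Function Nat Set

noncomputable section

section PowerSeries

variable {𝕜 : Type*} [RCLike 𝕜]

def coeffDeriv (a : ℕ → 𝕜) (j : ℕ) : 𝕜 := ((j + 1 : ℕ) : 𝕜) * a (j + 1)

lemma coeffDeriv_iterate (a : ℕ → 𝕜) (n j : ℕ) :
    coeffDeriv^[n] a j = ((j + n)! / j ! : 𝕜) * a (j + n) := by
  induction n generalizing j with
  | zero => simp [factorial_ne_zero]
  | succ n ih =>
    rw [iterate_succ_apply', coeffDeriv, ih, factorial_succ j,
      show j + 1 + n = j + (n + 1) by ring]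
    push_cast
    field_simp

lemma summable_pow_mul_norm_mul_pow_of_norm_le {a : ℕ → 𝕜} {C R ρ : ℝ}
    (ha : ∀ j, ‖a j‖ ≤ C / R ^ j) (hρ : 0 ≤ ρ) (hρR : ρ < R) (k : ℕ) :
    Summable fun j : ℕ => (j : ℝ) ^ k * ‖a j‖ * ρ ^ j := by
  have hR : 0 < R := hρ.trans_lt hρR
  have hq : ‖ρ / R‖ < 1 := by
    rwa [Real.norm_of_nonneg (by positivity), div_lt_one hR]
  refine ((summable_pow_mul_geometric_of_norm_lt_one k hq).mul_left C).of_nonneg_of_le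
    (fun j => by positivity) fun j => ?_
  calc (j : ℝ) ^ k * ‖a j‖ * ρ ^ j ≤ (j : ℝ) ^ k * (C / R ^ j) * ρ ^ j := by gcongr; exact ha j
    _ = C * ((j : ℝ) ^ k * (ρ / R) ^ j) := by rw [div_pow]; field_simp

lemma summable_pow_mul_norm_coeffDeriv_mul_pow {a : ℕ → 𝕜} {ρ : ℝ} (hρ : 0 < ρ)
    (ha : ∀ k : ℕ, Summable fun j : ℕ => (j : ℝ) ^ k * ‖a j‖ * ρ ^ j) (k : ℕ) :
    Summable fun j : ℕ => (j : ℝ) ^ k * ‖coeffDeriv a j‖ * ρ ^ j := by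
  refine (((summable_nat_add_iff 1).mpr (ha (k + 1))).mul_right ρ⁻¹).of_nonneg_of_le
    (fun j => by positivity) fun j => ?_
  rw [coeffDeriv, norm_mul, RCLike.norm_natCast]
  calc (j : ℝ) ^ k * (((j + 1 : ℕ) : ℝ) * ‖a (j + 1)‖) * ρ ^ j
      ≤ ((j + 1 : ℕ) : ℝ) ^ k * (((j + 1 : ℕ) : ℝ) * ‖a (j + 1)‖) * ρ ^ j := by
        gcongr; exact_mod_cast le_succ j
    _ = ((j + 1 : ℕ) : ℝ) ^ (k + 1) * ‖a (j + 1)‖ * ρ ^ (j + 1) * ρ⁻¹ := by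
        field_simp; ring

theorem hasDerivAt_tsum_mul_pow {a : ℕ → 𝕜} {ρ : ℝ}
    (ha : Summable fun j => ‖coeffDeriv a j‖ * ρ ^ j) {w : 𝕜} (hw : ‖w‖ < ρ) :
    HasDerivAt (fun w => ∑' j, a j * w ^ j) (∑' j, coeffDeriv a j * w ^ j) w := by
  have hρ : 0 < ρ := (norm_nonneg w).trans_lt hw
  have hu : Summable fun j => ‖a j‖ * j * ρ ^ (j - 1) := by
    refine (summable_nat_add_iff 1).mp (ha.congr fun j => ?_)
    rw [coeffDeriv, norm_mul, RCLike.norm_natCast, add_tsub_cancel_right]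
    ring
  have hbound : ∀ (j : ℕ) (y : 𝕜), y ∈ Metric.ball 0 ρ →
      ‖a j * (j * y ^ (j - 1))‖ ≤ ‖a j‖ * j * ρ ^ (j - 1) := by
    intro j y hy
    rw [norm_mul, norm_mul, norm_pow, RCLike.norm_natCast, ← mul_assoc]
    gcongr
    exact (mem_ball_zero_iff.mp hy).le
  have hsum0 : Summable fun j => a j * (0 : 𝕜) ^ j :=
    summable_of_ne_finset_zero (s := {0}) fun j hj => by
      rw [zero_pow (by simpa using hj), mul_zero]
  refine (hasDerivAt_tsum_of_isPreconnected hu Metric.isOpen_ball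
    (convex_ball (0 : 𝕜) ρ).isPreconnected (fun j y _ => (hasDerivAt_pow j y).const_mul (a j))
    hbound (Metric.mem_ball_self hρ) hsum0 (mem_ball_zero_iff.mpr hw)).congr_deriv ?_
  rw [← succ_injective.tsum_eq]
  · refine tsum_congr fun j => ?_
    rw [coeffDeriv, succ_sub_one]
    ring
  · rintro (_ | k) hj
    · simp at hj
    · exact ⟨k, rfl⟩

theorem differentiableOn_tsum_mul_pow {a : ℕ → 𝕜} {ρ : ℝ}
    (ha : Summable fun j => ‖coeffDeriv a j‖ * ρ ^ j) :
    DifferentiableOn 𝕜 (fun w => ∑' j, a j * w ^ j) (Metric.ball 0 ρ) := fun _ hw =>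
  (hasDerivAt_tsum_mul_pow ha (mem_ball_zero_iff.mp hw)).differentiableAt.differentiableWithinAt

theorem iteratedDeriv_tsum_mul_pow {a : ℕ → 𝕜} {ρ : ℝ}
    (ha : ∀ k : ℕ, Summable fun j : ℕ => (j : ℝ) ^ k * ‖a j‖ * ρ ^ j) (n : ℕ) {w : 𝕜}
    (hw : ‖w‖ < ρ) :
    iteratedDeriv n (fun w => ∑' j, a j * w ^ j) w = ∑' j, coeffDeriv^[n] a j * w ^ j := by
  have hρ : 0 < ρ := (norm_nonneg w).trans_lt hw
  induction n generalizing a with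
  | zero => simp
  | succ n ih =>
    have hderiv : deriv (fun w => ∑' j, a j * w ^ j) =ᶠ[𝓝 w]
        fun w => ∑' j, coeffDeriv a j * w ^ j := by
      filter_upwards [Metric.isOpen_ball.mem_nhds (mem_ball_zero_iff.mpr hw)] with y hy
      refine (hasDerivAt_tsum_mul_pow ?_ (mem_ball_zero_iff.mp hy)).deriv
      simpa using summable_pow_mul_norm_coeffDeriv_mul_pow hρ ha 0
    rw [iteratedDeriv_succ', hderiv.iteratedDeriv_eq,
      ih (summable_pow_mul_norm_coeffDeriv_mul_pow hρ ha), iterate_succ_apply]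

end PowerSeries

section LatticeSums

variable {ι : Type*} (P : ι → ℂ)

def invPowSum (j : ℕ) : ℂ := ∑' i, (P i ^ j)⁻¹

def zetaCoeff (j : ℕ) : ℂ := if 2 ≤ j then invPowSum P (j + 1) else 0

variable {P}

lemma invPowSum_eq_zero_of_odd {σ : ι ≃ ι} (hσ : ∀ i, P (σ i) = -P i) {j : ℕ} (hj : Odd j) :
    invPowSum P j = 0 := by
  have h : invPowSum P j = -invPowSum P j := by
    conv_lhs => rw [invPowSum, ← σ.tsum_eq]
    simp only [hσ, hj.neg_pow, inv_neg, tsum_neg, invPowSum]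
  exact self_eq_neg.mp h

lemma support_zetaCoeff_subset {σ : ι ≃ ι} (hσ : ∀ i, P (σ i) = -P i) :
    support (zetaCoeff P) ⊆ range fun k => 2 * k + 3 := by
  intro j hj
  rw [mem_support, zetaCoeff] at hj
  split_ifs at hj with h2
  · obtain ⟨k, rfl | rfl⟩ := Nat.even_or_odd' j
    · exact absurd (invPowSum_eq_zero_of_odd hσ ⟨k, rfl⟩) hj
    · exact ⟨k - 1, by dsimp only; omega⟩
  · exact absurd rfl hj

lemma norm_inv_pow_add_three_le {r : ℝ} (hr : 0 < r) {p : ℂ} (hp : r ≤ ‖p‖) (j : ℕ) :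
    ‖(p ^ (j + 3))⁻¹‖ ≤ (‖p‖ ^ 3)⁻¹ / r ^ j := by
  rw [norm_inv, norm_pow, pow_add, mul_inv, div_eq_inv_mul]
  gcongr

lemma norm_zetaCoeff_le (hP : Summable fun i => (‖P i‖ ^ 3)⁻¹) {r : ℝ} (hr : 0 < r)
    (hPr : ∀ i, r ≤ ‖P i‖) (j : ℕ) :
    ‖zetaCoeff P j‖ ≤ (∑' i, (‖P i‖ ^ 3)⁻¹) * r ^ 2 / r ^ j := by
  rw [zetaCoeff]
  split_ifs with h2
  · obtain ⟨m, rfl⟩ : ∃ m, j = m + 2 := ⟨j - 2, by omega⟩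
    rw [pow_add, mul_div_mul_right _ _ (by positivity)]
    exact tsum_of_norm_bounded (hP.hasSum.div_const _) fun i =>
      norm_inv_pow_add_three_le hr (hPr i) m
  · rw [norm_zero]
    have : 0 ≤ ∑' i, (‖P i‖ ^ 3)⁻¹ := tsum_nonneg fun i => by positivity
    positivity

lemma hasSum_zetaSummand {p z : ℂ} (hz : ‖z‖ < ‖p‖) :
    HasSum (fun j : ℕ => z ^ (j + 2) * (p ^ (j + 3))⁻¹) (-(1 / (z - p) + 1 / p + z / p ^ 2)) := by
  have hp : p ≠ 0 := norm_pos_iff.mp ((norm_nonneg z).trans_lt hz)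
  have hzp : p - z ≠ 0 := sub_ne_zero.mpr fun h => hz.ne (by rw [h])
  have hq : ‖z / p‖ < 1 := by rwa [norm_div, div_lt_one (norm_pos_iff.mpr hp)]
  have hzp' : z - p ≠ 0 := fun h => hzp (by linear_combination -h)
  rw [show -(1 / (z - p) + 1 / p + z / p ^ 2) = (1 - z / p)⁻¹ * (z ^ 2 / p ^ 3) by
    field_simp; ring]
  refine ((hasSum_geometric_of_norm_lt_one hq).mul_right _).congr_fun fun j => ?_
  rw [div_pow]
  field_simp
  ring

theorem tsum_zetaSummand_eq (hP : Summable fun i => (‖P i‖ ^ 3)⁻¹) {r : ℝ}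
    (hPr : ∀ i, r ≤ ‖P i‖) {z : ℂ} (hz : ‖z‖ < r) :
    ∑' i, (1 / (z - P i) + 1 / P i + z / P i ^ 2) = -∑' j, zetaCoeff P j * z ^ j := by
  have hr : 0 < r := (norm_nonneg z).trans_lt hz
  have hq : ‖‖z‖ / r‖ < 1 := by
    rwa [Real.norm_of_nonneg (by positivity), div_lt_one hr]
  set f : ι → ℕ → ℂ := fun i j => z ^ (j + 2) * (P i ^ (j + 3))⁻¹
  have hf : Summable (uncurry f) := by
    refine (hP.mul_of_nonneg ((summable_geometric_of_norm_lt_one hq).mul_left (‖z‖ ^ 2))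
      (fun i => by positivity) fun j => by positivity).of_norm_bounded fun ⟨i, j⟩ => ?_
    calc ‖f i j‖ ≤ ‖z‖ ^ (j + 2) * ((‖P i‖ ^ 3)⁻¹ / r ^ j) := by
          rw [norm_mul, norm_pow]
          gcongr
          exact norm_inv_pow_add_three_le hr (hPr i) j
      _ = (‖P i‖ ^ 3)⁻¹ * (‖z‖ ^ 2 * (‖z‖ / r) ^ j) := by
          rw [div_pow, pow_add]; field_simp
  have hsupp : support (fun j => zetaCoeff P j * z ^ j) ⊆ range (· + 2) := by
    intro j hj
    by_cases h2 : 2 ≤ j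
    · exact ⟨j - 2, by simp only; omega⟩
    · simp [zetaCoeff, h2] at hj
  calc ∑' i, (1 / (z - P i) + 1 / P i + z / P i ^ 2) = ∑' i, -∑' j, f i j :=
        tsum_congr fun i => by rw [(hasSum_zetaSummand (hz.trans_le (hPr i))).tsum_eq, neg_neg]
    _ = -∑' j, ∑' i, f i j := by rw [tsum_neg, hf.tsum_comm]
    _ = -∑' j, zetaCoeff P (j + 2) * z ^ (j + 2) := by
        congr 1
        refine tsum_congr fun j => ?_
        rw [zetaCoeff, if_pos (by omega), invPowSum, ← tsum_mul_right]
        exact tsum_congr fun i => mul_comm _ _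
    _ = -∑' j, zetaCoeff P j * z ^ j := congrArg _ ((add_left_injective 2).tsum_eq hsupp)

end LatticeSums

section Lattice

variable {ω₁ ω₂ : ℂ}

def nonzeroLatticePt (ω₁ ω₂ : ℂ) (p : {p : ℤ × ℤ // p ≠ 0}) : ℂ := latticePt ω₁ ω₂ p

lemma latticePt_neg (p : ℤ × ℤ) : latticePt ω₁ ω₂ (-p) = -latticePt ω₁ ω₂ p := by
  simp only [latticePt, Prod.fst_neg, Prod.snd_neg, Int.cast_neg]
  ring

lemma support_zetaCoeff_nonzeroLatticePt_subset :
    support (zetaCoeff (nonzeroLatticePt ω₁ ω₂)) ⊆ range fun k => 2 * k + 3 :=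
  support_zetaCoeff_subset (σ := (Equiv.neg _).subtypeEquiv (by simp)) fun p => latticePt_neg p.1

lemma summable_norm_latticePt_inv_pow_three (hω : 0 < (ω₂ / ω₁).im) :
    Summable fun p : ℤ × ℤ => (‖latticePt ω₁ ω₂ p‖ ^ 3)⁻¹ := by
  have hω₁ : ω₁ ≠ 0 := by
    rintro rfl
    simp at hω
  let τ : UpperHalfPlane := ⟨ω₂ / ω₁, hω⟩
  let e : ℤ × ℤ ≃ (Fin 2 → ℤ) := (Equiv.prodComm ℤ ℤ).trans (finTwoArrowEquiv ℤ).symm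
  refine ((e.summable_iff.mpr (EisensteinSeries.summable_norm_eisSummand le_rfl τ)).mul_left
    (‖2 * ω₁‖ ^ 3)⁻¹).congr fun p => ?_
  have hlat : latticePt ω₁ ω₂ p = 2 * ω₁ * (p.2 * (τ : ℂ) + p.1) := by
    simp only [latticePt, τ]
    field_simp
    ring
  rw [hlat, norm_mul (2 * ω₁), mul_pow, mul_inv]
  congr 1
  simp [e, EisensteinSeries.eisSummand]

theorem wzeta_eq_inv_sub_tsum (hω : 0 < (ω₂ / ω₁).im) {r : ℝ}
    (hmin : ∀ p : ℤ × ℤ, p ≠ 0 → r ≤ ‖latticePt ω₁ ω₂ p‖) {z : ℂ} (hz : ‖z‖ < r) :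
    wzeta ω₁ ω₂ z = z⁻¹ - ∑' j, zetaCoeff (nonzeroLatticePt ω₁ ω₂) j * z ^ j := by
  rw [wzeta, one_div, sub_eq_add_neg]
  exact congrArg _ (tsum_zetaSummand_eq ((summable_norm_latticePt_inv_pow_three hω).subtype _)
    (fun p => hmin p.1 p.2) hz)

theorem iteratedDeriv_wzeta (hω : 0 < (ω₂ / ω₁).im) {r : ℝ}
    (hmin : ∀ p : ℤ × ℤ, p ≠ 0 → r ≤ ‖latticePt ω₁ ω₂ p‖) {z : ℂ} (hz0 : z ≠ 0) (hz : ‖z‖ < r)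
    (m : ℕ) :
    iteratedDeriv m (wzeta ω₁ ω₂) z = (-1) ^ m * m ! * z ^ (-1 - m : ℤ) -
      ∑' j, coeffDeriv^[m] (zetaCoeff (nonzeroLatticePt ω₁ ω₂)) j * z ^ j := by
  set a := zetaCoeff (nonzeroLatticePt ω₁ ω₂)
  have hr : 0 < r := (norm_nonneg z).trans_lt hz
  obtain ⟨ρ, hzρ, hρr⟩ := exists_between hz
  have ha : ∀ k : ℕ, Summable fun j : ℕ => (j : ℝ) ^ k * ‖a j‖ * ρ ^ j :=
    summable_pow_mul_norm_mul_pow_of_norm_le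
      (norm_zetaCoeff_le ((summable_norm_latticePt_inv_pow_three hω).subtype _) hr
        fun p => hmin p.1 p.2) ((norm_nonneg z).trans hzρ.le) hρr
  have hζ : wzeta ω₁ ω₂ =ᶠ[𝓝 z] fun w => w⁻¹ - ∑' j, a j * w ^ j := by
    filter_upwards [Metric.isOpen_ball.mem_nhds (mem_ball_zero_iff.mpr hz)] with w hw
    exact wzeta_eq_inv_sub_tsum hω hmin (mem_ball_zero_iff.mp hw)
  have hseries : ContDiffAt ℂ m (fun w => ∑' j, a j * w ^ j) z :=
    ((differentiableOn_tsum_mul_pow (by simpa using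
      summable_pow_mul_norm_coeffDeriv_mul_pow ((norm_nonneg z).trans_lt hzρ) ha 0)).analyticAt
      (Metric.isOpen_ball.mem_nhds (mem_ball_zero_iff.mpr hzρ))).contDiffAt
  rw [hζ.iteratedDeriv_eq, iteratedDeriv_fun_sub (contDiffAt_inv ℂ hz0) hseries,
    iteratedDeriv_eq_iterate, iter_deriv_inv, iteratedDeriv_tsum_mul_pow ha m hzρ]

end Lattice

end

theorem stmt14_general (ω₁ ω₂ : ℂ) (hω : 0 < (ω₂ / ω₁).im)
    (r : ℝ) (hmin : ∀ p : ℤ × ℤ, p ≠ 0 → r ≤ ‖latticePt ω₁ ω₂ p‖)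
    (s : ℕ → ℂ) (hs1 : s 1 = 0)
    (hs : ∀ j : ℕ, 2 ≤ j →
      s j = ∑' p : {p : ℤ × ℤ // p ≠ 0}, ((latticePt ω₁ ω₂ p.1)^(2*j))⁻¹)
    (z : ℂ) (hz0 : z ≠ 0) (hz : ‖z‖ < r) :
    wzeta ω₁ ω₂ z = 1/z - ∑' k : ℕ, s (k+2) * z^(2*(k+1)+1) ∧
    ∀ n : ℕ, iteratedDeriv (2*n) (wzeta ω₁ ω₂) z
      = (Nat.factorial (2*n) : ℂ)/z^(2*n+1)
        - ∑' k : ℕ, s (n+k+1) *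
            ((Nat.factorial (2*n+2*k+1) : ℂ)/(Nat.factorial (2*k+1))) * z^(2*k+1) := by
  have ha_odd : ∀ m, zetaCoeff (nonzeroLatticePt ω₁ ω₂) (2 * m + 1) = s (m + 1) := by
    rintro (_ | m)
    · simp [zetaCoeff, hs1]
    · rw [hs (m + 2) (by omega)]
      simp only [zetaCoeff, if_pos (show 2 ≤ 2 * (m + 1) + 1 by omega)]
      rfl
  constructor
  · rw [wzeta_eq_inv_sub_tsum hω hmin hz, one_div,
      ← (Injective.tsum_eq (g := fun k => 2 * k + 3) (fun _ _ h => by simp only at h; omega)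
        ((support_mul_subset_left _ _).trans support_zetaCoeff_nonzeroLatticePt_subset))]
    congr 2 with k
    rw [show 2 * k + 3 = 2 * (k + 1) + 1 by ring, ha_odd]
  · intro n
    rw [iteratedDeriv_wzeta hω hmin hz0 hz,
      ← (Injective.tsum_eq (g := fun k => 2 * k + 1) (fun _ _ h => by simp only at h; omega) ?_)]
    · congr 1
      · rw [pow_mul, neg_one_sq, one_pow, one_mul, div_eq_mul_inv, ← zpow_natCast, ← zpow_neg]
        push_cast
        ring_nf
      · congr 1 with k
        rw [coeffDeriv_iterate, show 2 * k + 1 + 2 * n = 2 * (n + k) + 1 by ring, ha_odd,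
          show 2 * (n + k) + 1 = 2 * n + 2 * k + 1 by ring]
        ring
    · intro j hj
      have hj' : zetaCoeff (nonzeroLatticePt ω₁ ω₂) (j + 2 * n) ≠ 0 := fun h =>
        hj (by simp [coeffDeriv_iterate, h])
      obtain ⟨k, hk⟩ := support_zetaCoeff_nonzeroLatticePt_subset hj'
      exact ⟨k + 1 - n, by dsimp only at hk ⊢; omega⟩

theorem stmt14 (ω₁ ω₂ : ℂ) (hω : 0 < (ω₂ / ω₁).im)
    (r : ℝ) (hr : 0 < r) (hmin : ∀ p : ℤ × ℤ, p ≠ 0 → r ≤ ‖latticePt ω₁ ω₂ p‖)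
    (s : ℕ → ℂ) (hs1 : s 1 = 0)
    (hs : ∀ j : ℕ, 2 ≤ j →
      s j = ∑' p : {p : ℤ × ℤ // p ≠ 0}, ((latticePt ω₁ ω₂ p.1)^(2*j))⁻¹)
    (z : ℂ) (hz0 : z ≠ 0) (hz : ‖z‖ < r) :
    wzeta ω₁ ω₂ z = 1/z - ∑' k : ℕ, s (k+2) * z^(2*(k+1)+1) ∧
    ∀ n : ℕ, iteratedDeriv (2*n) (wzeta ω₁ ω₂) z
      = (Nat.factorial (2*n) : ℂ)/z^(2*n+1)
        - ∑' k : ℕ, s (n+k+1) *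
            ((Nat.factorial (2*n+2*k+1) : ℂ)/(Nat.factorial (2*k+1))) * z^(2*k+1) :=
  stmt14_general ω₁ ω₂ hω r hmin s hs1 hs z hz0 hz
end

section
/- Under the hypotheses of the previous boundedness result, if 0 ≤ h < 1/2 then the operator 𝒢(h) maps bounded sequences into sequences converging to zero: for every x ∈ ℓ^∞(ℝ²), ‖(𝒢(h)x)_n‖ → 0 as n → ∞; in fact ‖(𝒢(h)x)_n‖ ≤ C‖x‖[(h/(1−h))^{2n+2} + (h/(1+h))^{2n+2}]. -/
open scoped Nat

lemma aux_cast_eq (n m : ℕ) :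
    ((2*n+2*m+1).factorial : ℝ) / ((2*m).factorial * (2*n+1).factorial)
      = ((2*m + (2*n+1)).choose (2*n+1) : ℝ) := by
  have key := Nat.add_choose_mul_factorial_mul_factorial (2*m) (2*n+1)
  have h1 : (2*m + (2*n+1)) = 2*n+2*m+1 := by ring
  rw [h1] at key
  have := congrArg (fun k : ℕ => (k : ℝ)) key
  push_cast at this
  rw [h1]
  field_simp
  linarith [this]

theorem stmt17 (G : ℕ → ℕ → ((Fin 2 → ℝ) →L[ℝ] (Fin 2 → ℝ))) (C : ℝ) (hC : 0 ≤ C)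
    (hG : ∀ n m : ℕ, ‖G n m‖ ≤
      C * (Nat.factorial (2*n+2*m+1) : ℝ) /
        ((Nat.factorial (2*m)) * (Nat.factorial (2*n+1))))
    (hG00 : G 0 0 = 0)
    (h : ℝ) (h0 : 0 ≤ h) (h1 : h < 1/2)
    (x : lp (fun _ : ℕ => (Fin 2 → ℝ)) ⊤) :
    (∀ n : ℕ,
      ‖∑' m : ℕ, h^(2*n+2*m+2) • (G n m) ((x : ∀ _ : ℕ, Fin 2 → ℝ) m)‖
        ≤ C * ‖x‖ * ((h/(1-h))^(2*n+2) + (h/(1+h))^(2*n+2))) ∧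
    Filter.Tendsto
      (fun n : ℕ => ‖∑' m : ℕ, h^(2*n+2*m+2) • (G n m) ((x : ∀ _ : ℕ, Fin 2 → ℝ) m)‖)
      Filter.atTop (nhds 0) := by
  have hh1 : h < 1 := by linarith
  have hnorm : ‖h‖ < 1 := by rw [Real.norm_eq_abs, abs_of_nonneg h0]; exact hh1
  have h1h : (0:ℝ) < 1 - h := by linarith
  have hbound : ∀ n : ℕ,
      ‖∑' m : ℕ, h^(2*n+2*m+2) • (G n m) ((x : ∀ _ : ℕ, Fin 2 → ℝ) m)‖
        ≤ C * ‖x‖ * ((h/(1-h))^(2*n+2) + (h/(1+h))^(2*n+2)) := by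
    intro n
    set f : ℕ → (Fin 2 → ℝ) := fun m => h^(2*n+2*m+2) • (G n m) ((x : ∀ _ : ℕ, Fin 2 → ℝ) m)
    set bigF : ℕ → ℝ := fun j => ((j + (2*n+1)).choose (2*n+1) : ℝ) * h ^ j
    have hbigF : HasSum bigF (1 / (1-h)^(2*n+1+1)) :=
      hasSum_choose_mul_geometric_of_norm_lt_one (2*n+1) hnorm
    have hbigF_nonneg : ∀ j, 0 ≤ bigF j := fun j => by positivity
    -- bound on each term
    have hterm : ∀ m : ℕ, ‖f m‖ ≤ C * ‖x‖ * h^(2*n+2) * bigF (2*m) := by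
      intro m
      have hx : ‖(x : ∀ _ : ℕ, Fin 2 → ℝ) m‖ ≤ ‖x‖ :=
        lp.norm_apply_le_norm ENNReal.top_ne_zero x m
      have hGm : ‖(G n m) ((x : ∀ _ : ℕ, Fin 2 → ℝ) m)‖ ≤
          (C * (2*n+2*m+1).factorial / ((2*m).factorial * (2*n+1).factorial)) * ‖x‖ := by
        calc ‖(G n m) ((x : ∀ _ : ℕ, Fin 2 → ℝ) m)‖
            ≤ ‖G n m‖ * ‖(x : ∀ _ : ℕ, Fin 2 → ℝ) m‖ := (G n m).le_opNorm _
          _ ≤ (C * (2*n+2*m+1).factorial / ((2*m).factorial * (2*n+1).factorial)) * ‖x‖ := by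
              apply mul_le_mul (hG n m) hx (norm_nonneg _)
              have := (G n m).opNorm_nonneg
              exact le_trans this (hG n m)
      have hpos : (0:ℝ) ≤ h^(2*n+2*m+2) := by positivity
      calc ‖f m‖ = h^(2*n+2*m+2) * ‖(G n m) ((x : ∀ _ : ℕ, Fin 2 → ℝ) m)‖ := by
            simp [f, norm_smul, abs_of_nonneg h0, abs_of_nonneg hpos]
        _ ≤ h^(2*n+2*m+2) *
            ((C * (2*n+2*m+1).factorial / ((2*m).factorial * (2*n+1).factorial)) * ‖x‖) :=
            mul_le_mul_of_nonneg_left hGm hpos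
        _ = C * ‖x‖ * h^(2*n+2) * bigF (2*m) := by
            have := aux_cast_eq n m
            simp only [bigF]
            rw [mul_div_assoc, this]
            have hp : h^(2*n+2*m+2) = h^(2*n+2) * h^(2*m) := by ring
            rw [hp]; ring
    -- summability of bigF ∘ (2·)
    have hinj : Function.Injective (fun m : ℕ => 2*m) := fun a b hab => by
      simp only [] at hab; omega
    have hsum2 : Summable (fun m : ℕ => bigF (2*m)) := hbigF.summable.comp_injective hinj
    have hsumg : Summable (fun m : ℕ => C * ‖x‖ * h^(2*n+2) * bigF (2*m)) := hsum2.mul_left _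
    have hsumnf : Summable (fun m : ℕ => ‖f m‖) :=
      Summable.of_nonneg_of_le (fun m => norm_nonneg _) hterm hsumg
    have step1 : ‖∑' m, f m‖ ≤ ∑' m, ‖f m‖ := norm_tsum_le_tsum_norm hsumnf
    have step2 : ∑' m, ‖f m‖ ≤ ∑' m, C * ‖x‖ * h^(2*n+2) * bigF (2*m) :=
      Summable.tsum_le_tsum hterm hsumnf hsumg
    have step3 : ∑' m, bigF (2*m) ≤ 1 / (1-h)^(2*n+1+1) := by
      rw [← hbigF.tsum_eq]
      exact Summable.tsum_le_tsum_of_inj (fun m : ℕ => 2*m) hinj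
        (fun c _ => hbigF_nonneg c) (fun m => le_rfl) hsum2 hbigF.summable
    have hCx : (0:ℝ) ≤ C * ‖x‖ * h^(2*n+2) := by positivity
    have step4 : ∑' m, C * ‖x‖ * h^(2*n+2) * bigF (2*m)
        ≤ C * ‖x‖ * h^(2*n+2) * (1 / (1-h)^(2*n+1+1)) := by
      rw [tsum_mul_left]
      exact mul_le_mul_of_nonneg_left step3 hCx
    have key : C * ‖x‖ * h^(2*n+2) * (1 / (1-h)^(2*n+1+1))
        = C * ‖x‖ * (h/(1-h))^(2*n+2) := by
      rw [div_pow]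
      ring
    have hfinal : ‖∑' m, f m‖ ≤ C * ‖x‖ * (h/(1-h))^(2*n+2) := by
      rw [← key]; exact le_trans step1 (le_trans step2 step4)
    have hextra : (0:ℝ) ≤ C * ‖x‖ * (h/(1+h))^(2*n+2) := by positivity
    calc ‖∑' m, f m‖ ≤ C * ‖x‖ * (h/(1-h))^(2*n+2) := hfinal
      _ ≤ C * ‖x‖ * ((h/(1-h))^(2*n+2) + (h/(1+h))^(2*n+2)) := by nlinarith
  refine ⟨hbound, ?_⟩
  -- squeeze
  have ha : h/(1-h) < 1 := by rw [div_lt_one h1h]; linarith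
  have ha0 : 0 ≤ h/(1-h) := div_nonneg h0 h1h.le
  have hb : h/(1+h) < 1 := by rw [div_lt_one (by linarith)]; linarith
  have hb0 : 0 ≤ h/(1+h) := div_nonneg h0 (by linarith)
  have tendA : Filter.Tendsto (fun n : ℕ => (h/(1-h))^(2*n+2)) Filter.atTop (nhds 0) := by
    have := tendsto_pow_atTop_nhds_zero_of_lt_one ha0 ha
    have hmono : Filter.Tendsto (fun n : ℕ => 2*n+2) Filter.atTop Filter.atTop :=
      Filter.tendsto_atTop_mono (fun n => by simp only [id_eq]; omega) Filter.tendsto_id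
    exact this.comp hmono
  have tendB : Filter.Tendsto (fun n : ℕ => (h/(1+h))^(2*n+2)) Filter.atTop (nhds 0) := by
    have := tendsto_pow_atTop_nhds_zero_of_lt_one hb0 hb
    have hmono : Filter.Tendsto (fun n : ℕ => 2*n+2) Filter.atTop Filter.atTop :=
      Filter.tendsto_atTop_mono (fun n => by simp only [id_eq]; omega) Filter.tendsto_id
    exact this.comp hmono
  have tendSum : Filter.Tendsto
      (fun n : ℕ => C * ‖x‖ * ((h/(1-h))^(2*n+2) + (h/(1+h))^(2*n+2)))
      Filter.atTop (nhds 0) := by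
    have := (tendA.add tendB).const_mul (C * ‖x‖)
    simpa only [add_zero, mul_zero] using this
  exact squeeze_zero (fun n => norm_nonneg _) hbound tendSum
end
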